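/- Let P ⊆ ℝ^d be finite, Y ⊆ ℝ^d convex, φ₀, φ₁ : P → ℝ, p ∈ P, and v_i ∈ Lag_P^{φ_i}(p) ∩ Y for i = 0,1. Set φ_t = (1-t)φ₀ + tφ₁ and v_t = (1-t)v₀ + tv₁. Then the map t ∈ [0,1] ↦ dist(v_t, ℝ^d \\ (Lag_P^{φ_t}(p) ∩ Y)) is concave. -/

import Mathlib

open scoped RealInnerProductSpace Pointwise
open MeasureTheory

/-- The Laguerre cell of a point `p` for the function `φ` on the finite set `P`. -/
def Lag {d : ℕ} (P : Finset (EuclideanSpace ℝ (Fin d)))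
    (φ : EuclideanSpace ℝ (Fin d) → ℝ) (p : EuclideanSpace ℝ (Fin d)) :
    Set (EuclideanSpace ℝ (Fin d)) :=
  {y | ∀ q ∈ P, φ p + ⟪q - p, y⟫ ≤ φ q}

/-!
Write `R(x, s) = infDist x sᶜ` for the inradius of `s` at `x`. If `xᵢ ∈ sᵢ`, every point `y`
with `‖y - (a x₀ + b x₁)‖ < a R(x₀, s₀) + b R(x₁, s₁) =: D` splits as
`a (x₀ + (R(x₀, s₀) / D) w) + b (x₁ + (R(x₁, s₁) / D) w)` with `w = y - (a x₀ + b x₁)`,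
each summand lying in the ball of radius `R(xᵢ, sᵢ)` about `xᵢ`, hence in `sᵢ`. So the inradius
of `a s₀ + b s₁` at `a x₀ + b x₁` is at least `a R(x₀, s₀) + b R(x₁, s₁)`, and concavity follows
because the interpolated cells contain the Minkowski combinations of the cells.
-/

open Metric Set

section InfDistCompl

variable {E : Type*} [SeminormedAddCommGroup E] [NormedSpace ℝ E]

lemma add_smul_mem_of_norm_lt_infDist_compl {s : Set E} {x w : E} {D : ℝ} (hx : x ∈ s)
    (hw : ‖w‖ < D) : x + (infDist x sᶜ / D) • w ∈ s := by
  rcases (infDist_nonneg : 0 ≤ infDist x sᶜ).eq_or_lt with h | h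
  · simpa [← h] using hx
  refine ball_infDist_compl_subset (x := x) ?_
  have hD : 0 < D := (norm_nonneg w).trans_lt hw
  rw [mem_ball, dist_eq_norm, add_sub_cancel_left, norm_smul, Real.norm_of_nonneg (by positivity)]
  calc infDist x sᶜ / D * ‖w‖ < infDist x sᶜ / D * D := by gcongr
    _ = infDist x sᶜ := div_mul_cancel₀ _ hD.ne'

lemma mem_smul_add_smul_of_dist_lt {s₀ s₁ : Set E} {x₀ x₁ y : E} {a b : ℝ}
    (hx₀ : x₀ ∈ s₀) (hx₁ : x₁ ∈ s₁)
    (hy : dist y (a • x₀ + b • x₁) < a * infDist x₀ s₀ᶜ + b * infDist x₁ s₁ᶜ) :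
    y ∈ a • s₀ + b • s₁ := by
  set D := a * infDist x₀ s₀ᶜ + b * infDist x₁ s₁ᶜ
  set w := y - (a • x₀ + b • x₁)
  have hD : D ≠ 0 := (dist_nonneg.trans_lt hy).ne'
  rw [dist_eq_norm] at hy
  refine ⟨_, smul_mem_smul_set (add_smul_mem_of_norm_lt_infDist_compl hx₀ hy),
    _, smul_mem_smul_set (add_smul_mem_of_norm_lt_infDist_compl hx₁ hy), ?_⟩
  calc a • (x₀ + (infDist x₀ s₀ᶜ / D) • w) + b • (x₁ + (infDist x₁ s₁ᶜ / D) • w)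
      = (a • x₀ + b • x₁) + (D / D) • w := by simp only [D]; module
    _ = y := by rw [div_self hD, one_smul, add_sub_cancel]

lemma smul_infDist_compl_add_smul_le {s₀ s₁ s : Set E} {x₀ x₁ : E} {a b : ℝ}
    (hx₀ : x₀ ∈ s₀) (hx₁ : x₁ ∈ s₁) (hs : a • s₀ + b • s₁ ⊆ s) (hne : sᶜ.Nonempty) :
    a * infDist x₀ s₀ᶜ + b * infDist x₁ s₁ᶜ ≤ infDist (a • x₀ + b • x₁) sᶜ := by
  by_contra! hlt
  obtain ⟨y, hy, hdist⟩ := (infDist_lt_iff hne).1 hlt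
  exact hy (hs (mem_smul_add_smul_of_dist_lt hx₀ hx₁ (by rwa [dist_comm])))

theorem concaveOn_infDist_compl {F : Type*} [AddCommGroup F] [Module ℝ F] {D : Set F}
    (hD : Convex ℝ D) {C : F → Set E} {v : F →ᵃ[ℝ] E} (hv : ∀ t ∈ D, v t ∈ C t)
    (hC : ∀ s ∈ D, ∀ t ∈ D, ∀ a b : ℝ, 0 ≤ a → 0 ≤ b → a + b = 1 →
      a • C s + b • C t ⊆ C (a • s + b • t))
    (hne : ∀ t ∈ D, (C t)ᶜ.Nonempty) :
    ConcaveOn ℝ D fun t => infDist (v t) (C t)ᶜ := by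
  refine ⟨hD, fun s hs t ht a b ha hb hab => ?_⟩
  dsimp only
  rw [Convex.combo_affine_apply hab]
  exact smul_infDist_compl_add_smul_le (hv s hs) (hv t ht) (hC s hs t ht a b ha hb hab)
    (hne _ (hD hs ht ha hb hab))

end InfDistCompl

section Laguerre

variable {d : ℕ} {P : Finset (EuclideanSpace ℝ (Fin d))} {p : EuclideanSpace ℝ (Fin d)}

lemma smul_Lag_add_smul_Lag_subset {ψ₀ ψ₁ : EuclideanSpace ℝ (Fin d) → ℝ} {a b : ℝ}
    (ha : 0 ≤ a) (hb : 0 ≤ b) :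
    a • Lag P ψ₀ p + b • Lag P ψ₁ p ⊆ Lag P (a • ψ₀ + b • ψ₁) p := by
  rintro _ ⟨_, ⟨x, hx, rfl⟩, _, ⟨y, hy, rfl⟩, rfl⟩ q hq
  have h₀ := mul_le_mul_of_nonneg_left (hx q hq) ha
  have h₁ := mul_le_mul_of_nonneg_left (hy q hq) hb
  simp only [Pi.add_apply, Pi.smul_apply, smul_eq_mul, inner_add_right, real_inner_smul_right]
  linarith

lemma Lag_eq_univ_iff {ψ : EuclideanSpace ℝ (Fin d) → ℝ} :
    Lag P ψ p = univ ↔ ∀ q ∈ P, q = p := by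
  refine ⟨fun h q hq => ?_, fun h => eq_univ_of_forall fun y q hq => by simp [h q hq]⟩
  by_contra hqp
  have hu : ⟪q - p, q - p⟫ ≠ 0 := by simpa [sub_eq_zero] using hqp
  -- a point far out in the direction `q - p` violates the constraint indexed by `q`
  have hy := (h ▸ mem_univ (((ψ q - ψ p + 1) / ⟪q - p, q - p⟫) • (q - p)) : _ ∈ Lag P ψ p) q hq
  rw [real_inner_smul_right, div_mul_cancel₀ _ hu] at hy
  linarith

lemma Lag_inter_eq_univ_iff {ψ : EuclideanSpace ℝ (Fin d) → ℝ}
    {Y : Set (EuclideanSpace ℝ (Fin d))} :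
    Lag P ψ p ∩ Y = univ ↔ (∀ q ∈ P, q = p) ∧ Y = univ := by
  rw [← Lag_eq_univ_iff (ψ := ψ)]
  exact inf_eq_top_iff

lemma smul_Lag_inter_add_smul_Lag_inter_subset {ψ₀ ψ₁ : EuclideanSpace ℝ (Fin d) → ℝ}
    {Y : Set (EuclideanSpace ℝ (Fin d))} (hY : Convex ℝ Y) {a b : ℝ}
    (ha : 0 ≤ a) (hb : 0 ≤ b) (hab : a + b = 1) :
    a • (Lag P ψ₀ p ∩ Y) + b • (Lag P ψ₁ p ∩ Y) ⊆ Lag P (a • ψ₀ + b • ψ₁) p ∩ Y :=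
  subset_inter
    ((add_subset_add (smul_set_mono inter_subset_left) (smul_set_mono inter_subset_left)).trans
      (smul_Lag_add_smul_Lag_subset ha hb))
    ((add_subset_add (smul_set_mono inter_subset_right) (smul_set_mono inter_subset_right)).trans
      (hY.set_combo_subset ha hb hab))

end Laguerre

theorem dist_compl_Lag_concave_general {d : ℕ} (P : Finset (EuclideanSpace ℝ (Fin d)))
    (Y : Set (EuclideanSpace ℝ (Fin d))) (hYc : Convex ℝ Y)
    (φ₀ φ₁ : EuclideanSpace ℝ (Fin d) → ℝ)
    {p : EuclideanSpace ℝ (Fin d)}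
    {v₀ v₁ : EuclideanSpace ℝ (Fin d)}
    (hv₀ : v₀ ∈ Lag P φ₀ p ∩ Y) (hv₁ : v₁ ∈ Lag P φ₁ p ∩ Y) :
    ConcaveOn ℝ (Set.Icc (0:ℝ) 1) (fun t =>
      Metric.infDist ((1 - t) • v₀ + t • v₁)
        ((Lag P (fun x => (1 - t) * φ₀ x + t * φ₁ x) p ∩ Y)ᶜ)) := by
  set C : ℝ → Set (EuclideanSpace ℝ (Fin d)) :=
    fun t => Lag P (AffineMap.lineMap φ₀ φ₁ t) p ∩ Y
  have hC : ∀ s t a b : ℝ, 0 ≤ a → 0 ≤ b → a + b = 1 →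
      a • C s + b • C t ⊆ C (a • s + b • t) := fun s t a b ha hb hab => by
    simpa only [C, Convex.combo_affine_apply hab]
      using smul_Lag_inter_add_smul_Lag_inter_subset hYc ha hb hab
  have hv : ∀ t ∈ Icc (0 : ℝ) 1, AffineMap.lineMap v₀ v₁ t ∈ C t := by
    rintro t ⟨ht₀, ht₁⟩
    have := hC 0 1 (1 - t) t (sub_nonneg.2 ht₁) ht₀ (sub_add_cancel 1 t)
      (add_mem_add (smul_mem_smul_set (s := C 0) (by simpa [C] using hv₀))
        (smul_mem_smul_set (s := C 1) (by simpa [C] using hv₁)))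
    simpa [AffineMap.lineMap_apply_module] using this
  suffices ConcaveOn ℝ (Icc 0 1) fun t => infDist (AffineMap.lineMap v₀ v₁ t) (C t)ᶜ by
    simp only [C, AffineMap.lineMap_apply_module] at this
    exact this
  by_cases hdeg : (∀ q ∈ P, q = p) ∧ Y = univ
  -- if some cell is the whole space, so is every cell, and all distances are `infDist _ ∅ = 0`
  · have hCuniv : ∀ t, C t = univ := fun t => Lag_inter_eq_univ_iff.2 hdeg
    simpa [hCuniv] using concaveOn_const (0 : ℝ) (convex_Icc (0 : ℝ) 1)
  · exact concaveOn_infDist_compl (convex_Icc 0 1) hv (fun s _ t _ => hC s t)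
      fun t _ => nonempty_compl.2 (mt Lag_inter_eq_univ_iff.1 hdeg)

/-- Concavity of the distance to the complement of the trimmed Laguerre cell along a
linear interpolation of potentials and subgradients. -/
theorem dist_compl_Lag_concave {d : ℕ} (P : Finset (EuclideanSpace ℝ (Fin d)))
    (Y : Set (EuclideanSpace ℝ (Fin d))) (hYc : Convex ℝ Y)
    (φ₀ φ₁ : EuclideanSpace ℝ (Fin d) → ℝ)
    {p : EuclideanSpace ℝ (Fin d)} (hp : p ∈ P)
    {v₀ v₁ : EuclideanSpace ℝ (Fin d)}
    (hv₀ : v₀ ∈ Lag P φ₀ p ∩ Y) (hv₁ : v₁ ∈ Lag P φ₁ p ∩ Y) :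
    ConcaveOn ℝ (Set.Icc (0:ℝ) 1) (fun t =>
      Metric.infDist ((1 - t) • v₀ + t • v₁)
        ((Lag P (fun x => (1 - t) * φ₀ x + t * φ₁ x) p ∩ Y)ᶜ)) :=
  dist_compl_Lag_concave_general P Y hYc φ₀ φ₁ hv₀ hv₁
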